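/- arXiv:2006.05370 — 5 statements merged into one kernel-verified Lean document; each statement's English description precedes it below -/
import Mathlib

section
/- Generalized Grönwall inequality: let u : [0,T] → [0,∞) be continuous and suppose there exist constants a ≥ 0, b ≥ 0 and α ∈ (0,1) such that u(t) ≤ a + b ∫₀ᵗ (t−s)^{α−1} u(s) ds for all t ∈ [0,T]. Then there exists a constant C depending only on b, α, T such that u(t) ≤ C·a for all t ∈ [0,T]. -/
open MeasureTheory intervalIntegral

/-! The Bielecki trick: weight `u` by `exp (-L s)`. Since
`∫₀ᵗ (t-s)^(α-1) e^{L s} ds ≤ e^{L t} Γ(α) / L^α`, for `L` large the integral term is at most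
half of the weighted maximum `M` of `u`, so evaluating the hypothesis where the maximum is attained
gives `M ≤ 2a`, and hence `u t ≤ 2 e^{L T} a`. -/

open Real Set Filter

namespace SingularGronwall

variable {α L : ℝ}

theorem mul_exp_neg_mul_exp (y z : ℝ) : y * exp (-z) * exp z = y := by
  rw [mul_assoc, ← exp_add, neg_add_cancel, exp_zero, mul_one]

theorem intervalIntegrable_sub_rpow (hα : 0 < α) (t : ℝ) :
    IntervalIntegrable (fun s => (t - s) ^ (α - 1)) volume 0 t := by
  simpa using (intervalIntegrable_rpow' (a := t) (b := 0)
    (show (-1 : ℝ) < α - 1 by linarith)).comp_sub_left t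

theorem integral_rpow_mul_exp_neg_mul_le {t : ℝ} (hα : 0 < α) (hL : 0 < L) (ht : 0 ≤ t) :
    ∫ τ in (0 : ℝ)..t, τ ^ (α - 1) * exp (-(L * τ)) ≤ (1 / L) ^ α * Gamma α := by
  have hGamma := integral_rpow_mul_exp_neg_mul_Ioi hα hL
  have hint : IntegrableOn (fun τ : ℝ => τ ^ (α - 1) * exp (-(L * τ))) (Ioi 0) :=
    .of_integral_ne_zero (by rw [hGamma]; exact (mul_pos (by positivity) (Gamma_pos_of_pos hα)).ne')
  rw [intervalIntegral.integral_of_le ht, ← hGamma]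
  refine setIntegral_mono_set hint ?_ (.of_forall Ioc_subset_Ioi_self)
  filter_upwards [ae_restrict_mem measurableSet_Ioi] with τ hτ
  exact mul_nonneg (rpow_nonneg (le_of_lt hτ) _) (exp_pos _).le

theorem integral_sub_rpow_mul_exp_mul (t : ℝ) :
    ∫ s in (0 : ℝ)..t, (t - s) ^ (α - 1) * exp (L * s)
      = exp (L * t) * ∫ τ in (0 : ℝ)..t, τ ^ (α - 1) * exp (-(L * τ)) := by
  have hsplit : ∀ s, (t - s) ^ (α - 1) * exp (L * s)
      = exp (L * t) * ((t - s) ^ (α - 1) * exp (-(L * (t - s)))) := fun s => by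
    rw [mul_left_comm, ← exp_add]; ring_nf
  simp_rw [hsplit]
  rw [intervalIntegral.integral_const_mul,
    intervalIntegral.integral_comp_sub_left (fun τ => τ ^ (α - 1) * exp (-(L * τ))) t]
  simp

theorem integral_sub_rpow_mul_le_of_le_mul_exp {u : ℝ → ℝ} {M t : ℝ} (hα : 0 < α) (hL : 0 < L)
    (ht : 0 ≤ t) (hM : 0 ≤ M) (hu : ContinuousOn u (Icc 0 t))
    (hle : ∀ s ∈ Icc 0 t, u s ≤ M * exp (L * s)) :
    ∫ s in (0 : ℝ)..t, (t - s) ^ (α - 1) * u s ≤ M * exp (L * t) * ((1 / L) ^ α * Gamma α) := by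
  have hker := intervalIntegrable_sub_rpow hα t
  calc ∫ s in (0 : ℝ)..t, (t - s) ^ (α - 1) * u s
      ≤ ∫ s in (0 : ℝ)..t, M * ((t - s) ^ (α - 1) * exp (L * s)) := by
        refine integral_mono_on ht (hker.mul_continuousOn (by rwa [uIcc_of_le ht]))
          ((hker.mul_continuousOn (by fun_prop)).const_mul M) fun s hs => ?_
        rw [mul_left_comm]
        exact mul_le_mul_of_nonneg_left (hle s hs) (rpow_nonneg (by linarith [hs.2]) _)
    _ = M * exp (L * t) * ∫ τ in (0 : ℝ)..t, τ ^ (α - 1) * exp (-(L * τ)) := by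
        rw [intervalIntegral.integral_const_mul, integral_sub_rpow_mul_exp_mul, mul_assoc]
    _ ≤ M * exp (L * t) * ((1 / L) ^ α * Gamma α) := by
        gcongr
        exact integral_rpow_mul_exp_neg_mul_le hα hL ht

theorem exists_pos_mul_one_div_rpow_le (c : ℝ) (hα : 0 < α) :
    ∃ L > 0, c * (1 / L) ^ α ≤ 1 / 2 := by
  have hlim : Tendsto (fun L : ℝ => c * L ^ (-α)) atTop (nhds 0) := by
    simpa using (tendsto_rpow_neg_atTop hα).const_mul c
  obtain ⟨L, hL, hsmall⟩ := ((eventually_gt_atTop 0).and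
    (hlim.eventually (eventually_le_nhds (by norm_num : (0 : ℝ) < 1 / 2)))).exists
  refine ⟨L, hL, ?_⟩
  rwa [one_div, inv_rpow hL.le, ← rpow_neg hL.le]

theorem exists_forall_le_mul_exp {u : ℝ → ℝ} {T t : ℝ} (hu : ContinuousOn u (Icc 0 T))
    (ht : t ∈ Icc 0 T) (L : ℝ) :
    ∃ x ∈ Icc 0 T, ∀ s ∈ Icc 0 T, u s ≤ u x * exp (-(L * x)) * exp (L * s) := by
  obtain ⟨x, hx, hmax⟩ := isCompact_Icc.exists_isMaxOn ⟨t, ht⟩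
    (hu.mul (by fun_prop : Continuous fun s => exp (-(L * s))).continuousOn)
  refine ⟨x, hx, fun s hs => ?_⟩
  calc u s = u s * exp (-(L * s)) * exp (L * s) := (mul_exp_neg_mul_exp _ _).symm
    _ ≤ u x * exp (-(L * x)) * exp (L * s) := mul_le_mul_of_nonneg_right (hmax hs) (exp_pos _).le

end SingularGronwall

open SingularGronwall in
theorem generalized_gronwall_singular_kernel_general
    (T b α : ℝ) (hb : 0 ≤ b) (hα0 : 0 < α) :
    ∃ C : ℝ, 0 < C ∧ ∀ (u : ℝ → ℝ) (a : ℝ), 0 ≤ a →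
      ContinuousOn u (Set.Icc 0 T) →
      (∀ t ∈ Set.Icc (0:ℝ) T, 0 ≤ u t) →
      (∀ t ∈ Set.Icc (0:ℝ) T, u t ≤ a + b * ∫ s in (0:ℝ)..t, (t - s) ^ (α - 1) * u s) →
      ∀ t ∈ Set.Icc (0:ℝ) T, u t ≤ C * a := by
  obtain ⟨L, hL, hsmall⟩ := exists_pos_mul_one_div_rpow_le (b * Gamma α) hα0
  refine ⟨2 * exp (L * T), by positivity, fun u a ha hu hpos hineq t ht => ?_⟩
  obtain ⟨x, hx, hdom⟩ := exists_forall_le_mul_exp hu ht L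
  set M := u x * exp (-(L * x))
  have hM : 0 ≤ M := mul_nonneg (hpos x hx) (exp_pos _).le
  have hux : u x = M * exp (L * x) := (mul_exp_neg_mul_exp _ _).symm
  have hintegral := integral_sub_rpow_mul_le_of_le_mul_exp hα0 hL hx.1 hM
    (hu.mono (Icc_subset_Icc_right hx.2)) fun s hs => hdom s ⟨hs.1, hs.2.trans hx.2⟩
  have hhalf : M * exp (L * x) ≤ a + M * exp (L * x) / 2 := by
    calc M * exp (L * x) = u x := hux.symm
      _ ≤ a + b * ∫ s in (0 : ℝ)..x, (x - s) ^ (α - 1) * u s := hineq x hx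
      _ ≤ a + b * (M * exp (L * x) * ((1 / L) ^ α * Gamma α)) := by gcongr
      _ = a + M * exp (L * x) * (b * Gamma α * (1 / L) ^ α) := by ring
      _ ≤ a + M * exp (L * x) / 2 := by
          have := mul_le_mul_of_nonneg_left hsmall (mul_nonneg hM (exp_pos (L * x)).le)
          linarith
  have hM2a : M ≤ 2 * a := by
    nlinarith [one_le_exp (mul_nonneg hL.le hx.1)]
  calc u t ≤ M * exp (L * t) := hdom t ht
    _ ≤ 2 * a * exp (L * T) := by gcongr; exact ht.2
    _ = 2 * exp (L * T) * a := by ring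

/-- Generalized Grönwall inequality with weakly singular kernel:
if `u : [0,T] → [0,∞)` is continuous and `u t ≤ a + b ∫₀ᵗ (t-s)^(α-1) u s ds` on
`[0,T]` with `a, b ≥ 0` and `α ∈ (0,1)`, then `u t ≤ C * a` on `[0,T]`, where `C`
depends only on `b`, `α`, `T`. -/
theorem generalized_gronwall_singular_kernel
    (T b α : ℝ) (hT : 0 < T) (hb : 0 ≤ b) (hα0 : 0 < α) (hα1 : α < 1) :
    ∃ C : ℝ, 0 < C ∧ ∀ (u : ℝ → ℝ) (a : ℝ), 0 ≤ a →
      ContinuousOn u (Set.Icc 0 T) →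
      (∀ t ∈ Set.Icc (0:ℝ) T, 0 ≤ u t) →
      (∀ t ∈ Set.Icc (0:ℝ) T, u t ≤ a + b * ∫ s in (0:ℝ)..t, (t - s) ^ (α - 1) * u s) →
      ∀ t ∈ Set.Icc (0:ℝ) T, u t ≤ C * a :=
  generalized_gronwall_singular_kernel_general T b α hb hα0
end

section
/- If A_h is self-adjoint negative semidefinite on a finite-dimensional Hilbert space and ρ ∈ [0,2], then for all y ∈ D((λ−A_h)^{ρ/2}) and m ≥ 0 one has ‖e^{A_h t_m} y − (I − Δt A_h)^{−m} y‖ ≤ c Δt^{ρ/2} ‖(λ−A_h)^{ρ/2} y‖ with a constant c independent of Δt, m, y, where t_m = mΔt. -/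
/-! Put `x = -Δt μ ≥ 0`, so that the error is `|e^{-x} ^ m - (1 + x)⁻¹ ^ m|`. Both powers lie in
`[0, 1]`, so the error is at most `1`. Since `0 ≤ (1 + x)⁻¹ - e^{-x} ≤ x² (1 + x)⁻¹`, the mean value
bound for `a ^ m - b ^ m` gives the error `≤ m x² (1 + x)⁻ᵐ ≤ x` by Bernoulli's inequality. Hence the
error is at most `min 1 x ≤ x ^ (ρ/2) ≤ (Δt (lam - μ)) ^ (ρ/2)`, i.e. the claim holds with `c = 1`. -/

namespace Real

lemma exp_neg_le_inv_one_add {x : ℝ} (hx : -1 < x) : exp (-x) ≤ (1 + x)⁻¹ := by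
  rw [exp_neg]
  exact inv_anti₀ (by linarith) (by linarith [add_one_le_exp x])

lemma inv_one_add_sub_exp_neg_le {x : ℝ} (hx : -1 < x) :
    (1 + x)⁻¹ - exp (-x) ≤ x ^ 2 * (1 + x)⁻¹ := by
  have h1x : 0 < 1 + x := by linarith
  have hdiff : (1 + x)⁻¹ - (1 - x) = x ^ 2 * (1 + x)⁻¹ := by field_simp; ring
  linarith [one_sub_le_exp_neg x]

lemma abs_exp_neg_pow_sub_inv_one_add_pow_le_self {x : ℝ} (hx : 0 ≤ x) (m : ℕ) :
    |exp (-x) ^ m - ((1 + x) ^ m)⁻¹| ≤ x := by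
  have h1x : 0 < 1 + x := by linarith
  have hmax : max |(1 + x)⁻¹| |exp (-x)| = (1 + x)⁻¹ := by
    rw [abs_of_pos (inv_pos.2 h1x), abs_of_pos (exp_pos _)]
    exact max_eq_left (exp_neg_le_inv_one_add (by linarith))
  have hbern : m * x ≤ (1 + x) ^ m := by linarith [one_add_mul_le_pow (a := x) (by linarith) m]
  rw [abs_sub_comm, ← inv_pow]
  refine (abs_pow_sub_pow_le _ _ m).trans ?_
  rw [hmax, abs_of_nonneg (sub_nonneg.2 (exp_neg_le_inv_one_add (by linarith)))]
  rcases m with _ | m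
  · simpa using hx
  rw [Nat.add_sub_cancel]
  calc ((1 + x)⁻¹ - exp (-x)) * ↑(m + 1) * (1 + x)⁻¹ ^ m
      ≤ x ^ 2 * (1 + x)⁻¹ * ↑(m + 1) * (1 + x)⁻¹ ^ m := by
        gcongr
        exact inv_one_add_sub_exp_neg_le (by linarith)
    _ = x * (↑(m + 1) * x / (1 + x) ^ (m + 1)) := by rw [inv_pow]; field_simp; ring
    _ ≤ x := mul_le_of_le_one_right hx ((div_le_one (by positivity)).2 hbern)

lemma abs_exp_neg_pow_sub_inv_one_add_pow_le_one {x : ℝ} (hx : 0 ≤ x) (m : ℕ) :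
    |exp (-x) ^ m - ((1 + x) ^ m)⁻¹| ≤ 1 := by
  have h0 : 0 ≤ exp (-x) ^ m := by positivity
  have h1 : exp (-x) ^ m ≤ 1 := pow_le_one₀ (exp_pos _).le (exp_le_one_iff.2 (by linarith))
  have h2 : 0 ≤ ((1 + x) ^ m)⁻¹ := by positivity
  have h3 : ((1 + x) ^ m)⁻¹ ≤ 1 := inv_le_one_of_one_le₀ (one_le_pow₀ (by linarith))
  rw [abs_le]; constructor <;> linarith

lemma le_rpow_of_le_one_of_le {e x s : ℝ} (hx : 0 ≤ x) (hs0 : 0 ≤ s) (hs1 : s ≤ 1)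
    (he1 : e ≤ 1) (hex : e ≤ x) : e ≤ x ^ s := by
  rcases le_total x 1 with h | h
  · exact hex.trans (self_le_rpow_of_le_one hx h hs1)
  · exact he1.trans (one_le_rpow h hs0)

lemma abs_exp_neg_pow_sub_inv_one_add_pow_le_rpow {x s : ℝ} (hx : 0 ≤ x) (hs0 : 0 ≤ s)
    (hs1 : s ≤ 1) (m : ℕ) : |exp (-x) ^ m - ((1 + x) ^ m)⁻¹| ≤ x ^ s :=
  le_rpow_of_le_one_of_le hx hs0 hs1 (abs_exp_neg_pow_sub_inv_one_add_pow_le_one hx m)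
    (abs_exp_neg_pow_sub_inv_one_add_pow_le_self hx m)

end Real

open Real in
/-- Implicit Euler error with spatial regularity (spectral form):
for a self-adjoint negative semidefinite `A_h`, with eigenvalue `μ ≤ 0` and `lam > 0`,
`|e^{μ t_m} - (1 - Δt μ)^{-m}| ≤ c Δt^{ρ/2} (lam - μ)^{ρ/2}` for all `ρ ∈ [0,2]`,
`Δt > 0` and `m ≥ 0`, where `t_m = m Δt` and `c` is independent of `Δt`, `m`, `μ`. -/
theorem implicit_euler_error_spectral
    (lam : ℝ) (hlam : 0 < lam) :
    ∃ c : ℝ, 0 < c ∧ ∀ μ : ℝ, μ ≤ 0 → ∀ ρ ∈ Set.Icc (0:ℝ) 2, ∀ Δt : ℝ, 0 < Δt →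
      ∀ m : ℕ,
        |Real.exp (μ * (m * Δt)) - ((1 - Δt * μ) ^ m)⁻¹|
          ≤ c * Δt ^ (ρ / 2) * (lam - μ) ^ (ρ / 2) := by
  refine ⟨1, one_pos, fun μ hμ ρ ⟨hρ0, hρ2⟩ Δt hΔt m => ?_⟩
  have hx : 0 ≤ Δt * -μ := mul_nonneg hΔt.le (by linarith)
  have hxy : Δt * -μ ≤ Δt * (lam - μ) := by gcongr; linarith
  have herr : exp (μ * (m * Δt)) - ((1 - Δt * μ) ^ m)⁻¹
      = exp (-(Δt * -μ)) ^ m - ((1 + Δt * -μ) ^ m)⁻¹ := by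
    rw [← exp_nat_mul]; ring_nf
  calc |exp (μ * (m * Δt)) - ((1 - Δt * μ) ^ m)⁻¹|
      ≤ (Δt * -μ) ^ (ρ / 2) := herr ▸
        abs_exp_neg_pow_sub_inv_one_add_pow_le_rpow hx (by positivity) (by linarith) m
    _ ≤ (Δt * (lam - μ)) ^ (ρ / 2) := rpow_le_rpow hx hxy (by positivity)
    _ = 1 * Δt ^ (ρ / 2) * (lam - μ) ^ (ρ / 2) := by
      rw [mul_rpow hΔt.le (by linarith), one_mul]
end

section
/- Scalar rational approximation estimate underlying the implicit Euler error: there exists c > 0 such that for every μ ≥ 0, ρ ∈ [0,2], Δt > 0 and m ∈ ℕ, |e^{−μ mΔt} − (1 + Δt μ)^{−m}| ≤ c (Δt μ)^{ρ/2}. -/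
lemma aux_euler (x : ℝ) (hx0 : 0 ≤ x) (hx1 : x ≤ 1) :
    ∀ m : ℕ, 1 - m * x ^ 2 ≤ Real.exp (-(m * x)) * (1 + x) ^ m := by
  intro m
  induction m with
  | zero => simp
  | succ m ih =>
    have ht0 : 0 ≤ Real.exp (-x) * (1 + x) :=
      mul_nonneg (Real.exp_pos _).le (by linarith)
    have ht1 : Real.exp (-x) * (1 + x) ≤ 1 := by
      have h := Real.add_one_le_exp x
      rw [Real.exp_neg, inv_mul_le_iff₀ (Real.exp_pos x), mul_one]
      linarith
    have ht2 : 1 - x ^ 2 ≤ Real.exp (-x) * (1 + x) := by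
      have h := Real.add_one_le_exp (-x)
      nlinarith
    have hT : 0 ≤ Real.exp (-(m * x)) * (1 + x) ^ m :=
      mul_nonneg (Real.exp_pos _).le (by positivity)
    have hkey : Real.exp (-((m + 1 : ℕ) * x)) * (1 + x) ^ (m + 1)
        = (Real.exp (-(m * x)) * (1 + x) ^ m) * (Real.exp (-x) * (1 + x)) := by
      rw [mul_mul_mul_comm, ← Real.exp_add, pow_succ]
      congr 2
      push_cast; ring
    rw [hkey]
    push_cast
    rcases le_or_gt 0 (1 - m * x ^ 2) with h | h
    · have h1 := mul_le_mul_of_nonneg_right ih ht0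
      have h2 := mul_le_mul_of_nonneg_left ht2 h
      have h3 : 0 ≤ (m:ℝ) * x ^ 4 :=
        mul_nonneg (Nat.cast_nonneg m) (by positivity)
      nlinarith
    · have h1 := mul_nonneg hT ht0
      nlinarith [sq_nonneg x]


/-- Scalar rational approximation estimate underlying the implicit
Euler error: there is an absolute constant `c > 0` such that for every `μ ≥ 0`,
`ρ ∈ [0,2]`, `Δt > 0` and `m ∈ ℕ`,
`|e^{-μ m Δt} - (1 + Δt μ)^{-m}| ≤ c (Δt μ)^{ρ/2}`. -/
theorem implicit_euler_scalar_rational_estimate :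
    ∃ c : ℝ, 0 < c ∧ ∀ μ : ℝ, 0 ≤ μ → ∀ ρ ∈ Set.Icc (0:ℝ) 2, ∀ Δt : ℝ, 0 < Δt →
      ∀ m : ℕ,
        |Real.exp (-(μ * (m * Δt))) - ((1 + Δt * μ) ^ m)⁻¹|
          ≤ c * (Δt * μ) ^ (ρ / 2) := by
  refine ⟨1, one_pos, ?_⟩
  intro μ hμ ρ hρ Δt hΔt m
  obtain ⟨hρ0, hρ2⟩ := hρ
  set x := Δt * μ with hxdef
  have hx0 : 0 ≤ x := mul_nonneg hΔt.le hμ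
  have harg : μ * (m * Δt) = m * x := by rw [hxdef]; ring
  rw [harg, one_mul]
  have hbase : (0:ℝ) < 1 + x := by linarith
  have hbpos : (0:ℝ) < (1 + x) ^ m := pow_pos hbase m
  have hinvpos : (0:ℝ) < ((1 + x) ^ m)⁻¹ := inv_pos.mpr hbpos
  have hexp01 : Real.exp (-(m * x)) ≤ 1 := by
    rw [Real.exp_le_one_iff]
    have : 0 ≤ (m:ℝ) * x := mul_nonneg (Nat.cast_nonneg m) hx0
    linarith
  have hinv01 : ((1 + x) ^ m)⁻¹ ≤ 1 := by
    rw [inv_le_one_iff₀]; right; exact one_le_pow₀ (by linarith)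
  rcases le_or_gt 1 x with hx1 | hx1
  · -- large x : difference is at most 1 ≤ x^(ρ/2)
    have h1 : 1 ≤ x ^ (ρ / 2) := Real.one_le_rpow hx1 (by linarith)
    have habs : |Real.exp (-(m * x)) - ((1 + x) ^ m)⁻¹| ≤ 1 := by
      rw [abs_sub_le_iff]
      constructor <;> linarith [(Real.exp_pos (-(m * x))).le]
    linarith
  · -- small x
    have hle : Real.exp (-(m * x)) ≤ ((1 + x) ^ m)⁻¹ := by
      have h1 : Real.exp (-x) ≤ (1 + x)⁻¹ := by
        rw [Real.exp_neg]
        exact inv_anti₀ hbase (by linarith [Real.add_one_le_exp x])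
      calc Real.exp (-(m * x)) = (Real.exp (-x)) ^ m := by
            rw [← Real.exp_nat_mul]; ring_nf
        _ ≤ ((1 + x)⁻¹) ^ m := pow_le_pow_left₀ (Real.exp_pos _).le h1 m
        _ = ((1 + x) ^ m)⁻¹ := by rw [inv_pow]
    rw [abs_sub_comm, abs_of_nonneg (by linarith)]
    have haux := aux_euler x hx0 hx1.le m
    -- b - a ≤ m x² b
    have hb : ((1 + x) ^ m)⁻¹ * (1 + x) ^ m = 1 := inv_mul_cancel₀ hbpos.ne'
    have h2 : ((1 + x) ^ m)⁻¹ - Real.exp (-(m * x)) ≤ m * x ^ 2 * ((1 + x) ^ m)⁻¹ := by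
      have := mul_le_mul_of_nonneg_left haux hinvpos.le
      rw [mul_sub] at this
      nlinarith
    -- Bernoulli : m x ≤ (1+x)^m
    have hbern : (m:ℝ) * x ≤ (1 + x) ^ m := by
      have := one_add_mul_le_pow (by linarith : (-2:ℝ) ≤ x) m
      nlinarith
    have h3 : (m:ℝ) * x ^ 2 * ((1 + x) ^ m)⁻¹ ≤ x := by
      have h4 : (m:ℝ) * x * ((1 + x) ^ m)⁻¹ ≤ 1 := by
        have h4' := mul_le_mul_of_nonneg_right hbern hinvpos.le
        rwa [mul_inv_cancel₀ hbpos.ne'] at h4'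
      nlinarith
    have h5 : x ≤ x ^ (ρ / 2) := by
      rcases eq_or_lt_of_le hx0 with h | hxpos
      · rw [← h]
        rcases eq_or_lt_of_le hρ0 with h' | hρpos
        · simp [← h']
        · rw [Real.zero_rpow (by positivity : ρ / 2 ≠ 0)]
      · calc x = x ^ (1:ℝ) := (Real.rpow_one x).symm
          _ ≤ x ^ (ρ / 2) :=
            Real.rpow_le_rpow_of_exponent_ge hxpos hx1.le (by linarith)
    linarith
end

section
/- Scalar integrated implicit Euler estimate: for arbitrary small ε > 0 there exists c > 0 such that for all μ > 0, Δt ∈ (0,1], and m ≥ 1, |∑_{k=0}^{m−1} ∫_{t_k}^{t_{k+1}} (e^{−μ s} − (1+Δtμ)^{−(k+1)}) ds| ≤ c Δt^{1−ε}, uniformly in μ and m, where t_k = kΔt. -/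
open MeasureTheory intervalIntegral

/-- `a^(n+1) - b^(n+1) ≤ (n+1)(a-b)a^n` for `0 ≤ b ≤ a`. -/
lemma pow_sub_pow_le_aux {a b : ℝ} (hb : 0 ≤ b) (hba : b ≤ a) :
    ∀ n : ℕ, a ^ (n + 1) - b ^ (n + 1) ≤ ((n : ℝ) + 1) * (a - b) * a ^ n := by
  intro n
  induction n with
  | zero => simp
  | succ n ih =>
    have ha : 0 ≤ a := hb.trans hba
    have hpow : b ^ (n + 1) ≤ a ^ (n + 1) := pow_le_pow_left₀ hb hba _
    have h1 : a ^ (n + 2) - b ^ (n + 2)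
        = a * (a ^ (n + 1) - b ^ (n + 1)) + b ^ (n + 1) * (a - b) := by ring
    have h2 : a * (a ^ (n + 1) - b ^ (n + 1)) ≤ a * (((n : ℝ) + 1) * (a - b) * a ^ n) :=
      mul_le_mul_of_nonneg_left ih ha
    have h3 : b ^ (n + 1) * (a - b) ≤ a ^ (n + 1) * (a - b) :=
      mul_le_mul_of_nonneg_right hpow (by linarith)
    calc a ^ (n + 1 + 1) - b ^ (n + 1 + 1)
        = a * (a ^ (n + 1) - b ^ (n + 1)) + b ^ (n + 1) * (a - b) := h1
      _ ≤ a * (((n : ℝ) + 1) * (a - b) * a ^ n) + a ^ (n + 1) * (a - b) := by linarith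
      _ = (((n+1 : ℕ) : ℝ) + 1) * (a - b) * a ^ (n + 1) := by push_cast; ring

lemma exp_integral_eval (μ a b : ℝ) (hμ : μ ≠ 0) :
    ∫ s in a..b, Real.exp (-(μ * s)) = (Real.exp (-(μ * a)) - Real.exp (-(μ * b))) / μ := by
  have h : ∀ s : ℝ, Real.exp (-(μ * s)) = Real.exp ((-μ) * s) := by intro s; ring_nf
  have key : ∫ s in a..b, Real.exp ((-μ) * s)
      = (Real.exp ((-μ) * a) - Real.exp ((-μ) * b)) / μ := by
    rw [intervalIntegral.integral_comp_mul_left (fun x => Real.exp x) (neg_ne_zero.mpr hμ),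
      integral_exp, smul_eq_mul, eq_div_iff hμ]
    have hinv : (-μ)⁻¹ * μ = -1 := by field_simp
    calc (-μ)⁻¹ * (Real.exp (-μ * b) - Real.exp (-μ * a)) * μ
        = ((-μ)⁻¹ * μ) * (Real.exp (-μ * b) - Real.exp (-μ * a)) := by ring
      _ = Real.exp (-μ * a) - Real.exp (-μ * b) := by rw [hinv]; ring
  simp only [h, key, neg_mul]

/-- Scalar integrated implicit Euler estimate: for every
(arbitrarily small) `ε > 0` there is `c > 0` such that for all `μ > 0`,
`Δt ∈ (0,1]` and `m ≥ 1`,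
`|∑_{k=0}^{m-1} ∫_{t_k}^{t_{k+1}} (e^{-μ s} - (1+Δt μ)^{-(k+1)}) ds| ≤ c Δt^{1-ε}`,
uniformly in `μ` and `m`, where `t_k = k Δt`. -/
theorem implicit_euler_integrated_scalar_estimate :
    ∀ ε : ℝ, 0 < ε → ∃ c : ℝ, 0 < c ∧
      ∀ μ : ℝ, 0 < μ → ∀ Δt : ℝ, 0 < Δt → Δt ≤ 1 → ∀ m : ℕ, 1 ≤ m →
        |∑ k ∈ Finset.range m,
            ∫ s in ((k : ℝ) * Δt)..(((k : ℝ) + 1) * Δt),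
              (Real.exp (-(μ * s)) - ((1 + Δt * μ) ^ (k + 1))⁻¹)|
          ≤ c * Δt ^ (1 - ε) := by
  intro ε hε
  refine ⟨1, one_pos, ?_⟩
  intro μ hμ Δt hΔt hΔt1 m hm
  set x : ℝ := Δt * μ with hx
  have hxpos : 0 < x := mul_pos hΔt hμ
  have h1x : (0:ℝ) < 1 + x := by linarith
  set r : ℝ := (1 + x)⁻¹ with hr
  have hrpos : 0 < r := inv_pos.mpr h1x
  have hr1 : r * (1 + x) = 1 := inv_mul_cancel₀ (ne_of_gt h1x)
  set g : ℕ → ℝ := fun k => (Real.exp (-(μ * (k * Δt))) - r ^ k) / μ with hg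
  -- each term telescopes
  have hterm : ∀ k : ℕ,
      (∫ s in ((k : ℝ) * Δt)..(((k : ℝ) + 1) * Δt),
        (Real.exp (-(μ * s)) - ((1 + Δt * μ) ^ (k + 1))⁻¹)) = g k - g (k + 1) := by
    intro k
    have hint : (∫ s in ((k : ℝ) * Δt)..(((k : ℝ) + 1) * Δt),
        (Real.exp (-(μ * s)) - ((1 + Δt * μ) ^ (k + 1))⁻¹))
        = (∫ s in ((k : ℝ) * Δt)..(((k : ℝ) + 1) * Δt), Real.exp (-(μ * s)))
          - (∫ s in ((k : ℝ) * Δt)..(((k : ℝ) + 1) * Δt), ((1 + Δt * μ) ^ (k + 1))⁻¹ : ℝ) := by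
      apply intervalIntegral.integral_sub
      · exact (Real.continuous_exp.comp (by continuity)).intervalIntegrable _ _
      · exact intervalIntegrable_const
    rw [hint, exp_integral_eval μ _ _ (ne_of_gt hμ), intervalIntegral.integral_const]
    have hconst : ((1 + Δt * μ) ^ (k + 1))⁻¹ = r ^ (k + 1) := by
      rw [hr, ← inv_pow, hx]
    have hsm : ((((k : ℝ) + 1) * Δt - (k : ℝ) * Δt)) = Δt := by ring
    have hdtr : Δt * r ^ (k + 1) = (r ^ k - r ^ (k + 1)) / μ := by
      have hd : r ^ k - r ^ (k + 1) = r ^ (k + 1) * x := by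
        have hk : r ^ k = r ^ (k + 1) * (1 + x) := by
          rw [pow_succ, mul_assoc, hr1, mul_one]
        rw [hk]; ring
      rw [hd, hx]
      field_simp
    rw [hconst, smul_eq_mul, hsm, hdtr]
    simp only [hg]
    have h1 : μ * (((k : ℝ)+1) * Δt) = μ * ((((k+1 : ℕ)) : ℝ) * Δt) := by push_cast; ring
    rw [h1]
    ring
  rw [Finset.sum_congr rfl (fun k _ => hterm k), Finset.sum_range_sub' g]
  have hg0 : g 0 = 0 := by simp [hg]
  rw [hg0, zero_sub, abs_neg]
  simp only [hg]
  -- bound |(exp(-(μ m Δt)) - r^m)/μ| ≤ Δt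
  set b : ℝ := Real.exp (-x) with hb
  have hbpos : 0 < b := Real.exp_pos _
  have hba : b ≤ r := by
    rw [hb, hr, Real.exp_neg]
    apply inv_anti₀ h1x
    have := Real.add_one_le_exp x
    linarith
  have hexp_eq : Real.exp (-(μ * (m * Δt))) = b ^ m := by
    rw [hb, ← Real.exp_nat_mul]
    congr 1
    rw [hx]; push_cast; ring
  obtain ⟨n, rfl⟩ : ∃ n, m = n + 1 := ⟨m - 1, (Nat.succ_pred_eq_of_pos hm).symm⟩
  have h1b : 1 - x ≤ b := by
    rw [hb]; have := Real.add_one_le_exp (-x); linarith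
  have hab : r - b ≤ x ^ 2 / (1 + x) := by
    rw [le_div_iff₀ h1x]
    nlinarith [mul_le_mul_of_nonneg_right h1b h1x.le, hr1]
  have hbern : ((n : ℝ) + 1) * x ≤ (1 + x) ^ (n + 1) := by
    have := one_add_mul_le_pow (a := x) (by linarith) (n + 1)
    push_cast at this ⊢
    linarith
  have han : r ^ n = ((1 + x) ^ n)⁻¹ := by rw [hr, inv_pow]
  have key : ((n : ℝ) + 1) * (x ^ 2 / (1 + x)) * ((1 + x) ^ n)⁻¹ ≤ x := by
    have hp : (0:ℝ) < (1 + x) ^ (n + 1) := by positivity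
    have hpn : (0:ℝ) < (1 + x) ^ n := by positivity
    have heq : ((n : ℝ) + 1) * (x ^ 2 / (1 + x)) * ((1 + x) ^ n)⁻¹
        = (((n : ℝ) + 1) * x ^ 2) / ((1 + x) ^ (n + 1)) := by
      rw [pow_succ]
      field_simp
      ring
    rw [heq, div_le_iff₀ hp]
    nlinarith [mul_le_mul_of_nonneg_right hbern hxpos.le]
  have hdiff : r ^ (n + 1) - b ^ (n + 1) ≤ x := by
    have h1 := pow_sub_pow_le_aux hbpos.le hba n
    have h2 : ((n : ℝ) + 1) * (r - b) * r ^ n ≤ ((n : ℝ) + 1) * (x ^ 2 / (1 + x)) * r ^ n :=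
      mul_le_mul_of_nonneg_right (mul_le_mul_of_nonneg_left hab (by positivity))
        (pow_nonneg hrpos.le n)
    rw [han] at h1 h2
    linarith
  have hfinal : |(Real.exp (-(μ * ((n + 1 : ℕ) * Δt))) - r ^ (n + 1)) / μ| ≤ Δt := by
    rw [hexp_eq, abs_div, abs_of_pos hμ, div_le_iff₀ hμ]
    have h0 : b ^ (n + 1) ≤ r ^ (n + 1) := pow_le_pow_left₀ hbpos.le hba _
    rw [abs_sub_comm, abs_of_nonneg (by linarith)]
    calc r ^ (n + 1) - b ^ (n + 1) ≤ x := hdiff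
      _ = Δt * μ := hx
  have hrpow : Δt ≤ Δt ^ (1 - ε) := by
    calc Δt = Δt ^ (1:ℝ) := (Real.rpow_one Δt).symm
      _ ≤ Δt ^ (1 - ε) := Real.rpow_le_rpow_of_exponent_ge hΔt hΔt1 (by linarith)
  calc |(Real.exp (-(μ * ((n + 1 : ℕ) * Δt))) - r ^ (n + 1)) / μ| ≤ Δt := hfinal
    _ ≤ Δt ^ (1 - ε) := hrpow
    _ = 1 * Δt ^ (1 - ε) := (one_mul _).symm
end

section
/- Continuity in mean square of a stochastic convolution with smoothing: let A generate an analytic contraction semigroup on a Hilbert space H, λ > 0, and let Φ ∈ L(H₀, H) be a Hilbert–Schmidt operator such that (λ−A)^α Φ is Hilbert–Schmidt for some α ∈ (1/2, 3/4). Let W be an H₀-cylindrical (Q-)Wiener process and define Z(t) = ∫₀ᵗ (λ−A) e^{A(t−s)} Φ dW(s). Then for every γ ∈ (0, 1/4) there is c > 0 with (E‖Z(τ₂) − Z(τ₁)‖²)^{1/2} ≤ c (τ₂−τ₁)^γ for all 0 ≤ τ₁ < τ₂ ≤ T. -/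
open MeasureTheory intervalIntegral



/-- Dyadic iteration: from the `t⁻¹` smoothing bound and the Lipschitz-type
increment bound, iterating the semigroup property gives a bound with a
logarithmic (in `n`) constant. -/
lemma aux_dyadic {H : Type*} [NormedAddCommGroup H] [NormedSpace ℝ H]
    (T : ℝ) (hT : 0 < T) (S : ℝ → H →L[ℝ] H)
    (hSadd : ∀ s t : ℝ, 0 ≤ s → 0 ≤ t → S (s + t) = (S s).comp (S t))
    (F : H →ₗ[ℝ] H) (M₁ C₀ : ℝ) (hM₁ : 0 ≤ M₁) (hC₀ : 0 ≤ C₀)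
    (hsm : ∀ t : ℝ, 0 < t → ∀ y : H, ‖F (S t y)‖ ≤ M₁ * t⁻¹ * ‖y‖)
    (hinc : ∀ t : ℝ, 0 < t → ∀ y : H, ‖S t y - y‖ ≤ C₀ * t * ‖y‖) :
    ∀ n : ℕ, ∀ t : ℝ, 0 < t → t ≤ T → T ≤ 2 ^ n * t → ∀ x : H,
      ‖F (S t x)‖ ≤ (2 * M₁ / T + n * (M₁ * C₀)) * ‖x‖ := by
  intro n
  induction n with
  | zero =>
    intro t ht htT hTt x
    have htt : t = T := le_antisymm htT (by simpa using hTt)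
    subst htt
    have h1 := hsm t ht x
    have h2 : M₁ * t⁻¹ * ‖x‖ ≤ (2 * M₁ / t + 0 * (M₁ * C₀)) * ‖x‖ := by
      have : M₁ * t⁻¹ ≤ 2 * M₁ / t := by
        rw [div_eq_mul_inv]
        have : 0 ≤ M₁ * t⁻¹ := by positivity
        nlinarith
      nlinarith [norm_nonneg x]
    simpa using h1.trans h2
  | succ n ih =>
    intro t ht htT hTt x
    by_cases hc : 2 * t ≤ T
    · have h2t : (0:ℝ) < 2 * t := by linarith
      have hT2 : T ≤ 2 ^ n * (2 * t) := by
        calc T ≤ 2 ^ (n+1) * t := hTt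
        _ = 2 ^ n * (2 * t) := by ring
      have hs : S (2*t) x = S t (S t x) := by
        have h := hSadd t t ht.le ht.le
        rw [show t + t = 2*t by ring] at h
        rw [h]; rfl
      have hdiff : F (S t x) - F (S (2*t) x) = F (S t (x - S t x)) := by
        rw [hs, ← map_sub F, ← map_sub (S t)]
      have hstep : ‖F (S t x) - F (S (2*t) x)‖ ≤ M₁ * C₀ * ‖x‖ := by
        rw [hdiff]
        have h1 := hsm t ht (x - S t x)
        have h2 : ‖x - S t x‖ ≤ C₀ * t * ‖x‖ := by
          rw [norm_sub_rev]; exact hinc t ht x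
        have h3 : M₁ * t⁻¹ * ‖x - S t x‖ ≤ M₁ * t⁻¹ * (C₀ * t * ‖x‖) := by
          have : 0 ≤ M₁ * t⁻¹ := by positivity
          exact mul_le_mul_of_nonneg_left h2 this
        have h4 : M₁ * t⁻¹ * (C₀ * t * ‖x‖) = M₁ * C₀ * ‖x‖ := by
          field_simp
        linarith
      have h2 := ih (2*t) h2t hc hT2 x
      calc ‖F (S t x)‖ = ‖F (S (2*t) x) + (F (S t x) - F (S (2*t) x))‖ := by
            rw [add_sub_cancel]
      _ ≤ ‖F (S (2*t) x)‖ + ‖F (S t x) - F (S (2*t) x)‖ := norm_add_le _ _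
      _ ≤ (2 * M₁ / T + n * (M₁ * C₀)) * ‖x‖ + M₁ * C₀ * ‖x‖ := add_le_add h2 hstep
      _ = (2 * M₁ / T + (n+1 : ℕ) * (M₁ * C₀)) * ‖x‖ := by push_cast; ring
    · push_neg at hc
      have h1 := hsm t ht x
      have h2 : M₁ * t⁻¹ ≤ 2 * M₁ / T := by
        have hinv : t⁻¹ ≤ 2 / T := by
          rw [div_eq_mul_inv]
          have hT2 : T / 2 < t := by linarith
          have he : T⁻¹ * 2 = (T/2)⁻¹ := by field_simp
          rw [mul_comm, he]
          exact inv_anti₀ (by linarith) hT2.le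
        calc M₁ * t⁻¹ ≤ M₁ * (2 / T) := mul_le_mul_of_nonneg_left hinv hM₁
        _ = 2 * M₁ / T := by ring
      have h3 : (0:ℝ) ≤ (n+1 : ℕ) * (M₁ * C₀) := by positivity
      nlinarith [norm_nonneg x, mul_le_mul_of_nonneg_right h2 (norm_nonneg x)]

lemma aux_smooth {H : Type*} [NormedAddCommGroup H] [NormedSpace ℝ H]
    (T : ℝ) (hT : 0 < T) (S : ℝ → H →L[ℝ] H)
    (hSadd : ∀ s t : ℝ, 0 ≤ s → 0 ≤ t → S (s + t) = (S s).comp (S t))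
    (F : H →ₗ[ℝ] H) (M₁ C₀ : ℝ) (hM₁ : 0 ≤ M₁) (hC₀ : 0 ≤ C₀)
    (hsm : ∀ t : ℝ, 0 < t → ∀ y : H, ‖F (S t y)‖ ≤ M₁ * t⁻¹ * ‖y‖)
    (hinc : ∀ t : ℝ, 0 < t → ∀ y : H, ‖S t y - y‖ ≤ C₀ * t * ‖y‖)
    (δ : ℝ) (hδ : 0 < δ)
    (hdyadic : ∀ n : ℕ, ∀ t : ℝ, 0 < t → t ≤ T → T ≤ 2 ^ n * t → ∀ x : H,
      ‖F (S t x)‖ ≤ (2 * M₁ / T + n * (M₁ * C₀)) * ‖x‖) :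
    ∃ K : ℝ, 0 ≤ K ∧ ∀ t : ℝ, 0 < t → t ≤ T → ∀ x : H,
      ‖F (S t x)‖ ≤ K * t ^ (-δ) * ‖x‖ := by
  set K₀ : ℝ := 2 * M₁ / T + M₁ * C₀ + 2 * (M₁ * C₀) / δ with hK₀
  have hK₀0 : 0 ≤ K₀ := by positivity
  refine ⟨K₀ * T ^ δ, by positivity, ?_⟩
  intro t ht htT x
  have hw0 : 0 < T / t := by positivity
  have hw1 : 1 ≤ T / t := (one_le_div ht).mpr htT
  set w : ℝ := T / t with hwdef
  set n : ℕ := ⌈Real.logb 2 w⌉₊ with hn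
  have hlogb0 : 0 ≤ Real.logb 2 w := Real.logb_nonneg one_lt_two hw1
  have hTn : T ≤ 2 ^ n * t := by
    have h2 : w ≤ (2:ℝ) ^ (n:ℝ) := by
      calc w = (2:ℝ) ^ Real.logb 2 w :=
            (Real.rpow_logb two_pos (by norm_num) hw0).symm
      _ ≤ (2:ℝ) ^ (n:ℝ) :=
            Real.rpow_le_rpow_of_exponent_le one_le_two (Nat.le_ceil _)
    rw [Real.rpow_natCast] at h2
    calc T = w * t := (div_mul_cancel₀ T ht.ne').symm
    _ ≤ 2 ^ n * t := mul_le_mul_of_nonneg_right h2 ht.le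
  have hbound := hdyadic n t ht htT hTn x
  have hnle : (n:ℝ) ≤ 2 * Real.log w + 1 := by
    have h1 : (n:ℝ) < Real.logb 2 w + 1 := Nat.ceil_lt_add_one hlogb0
    have h2 : Real.logb 2 w ≤ 2 * Real.log w := by
      rw [Real.logb, div_le_iff₀ (Real.log_pos one_lt_two)]
      nlinarith [Real.log_two_gt_d9, Real.log_nonneg hw1]
    linarith
  have hwδ0 : (0:ℝ) < w ^ δ := Real.rpow_pos_of_pos hw0 δ
  have hlogw : Real.log w ≤ (1/δ) * w ^ δ := by
    have h1 : Real.log (w ^ δ) ≤ w ^ δ - 1 := Real.log_le_sub_one_of_pos hwδ0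
    rw [Real.log_rpow hw0] at h1
    have h2 : δ * Real.log w ≤ w ^ δ := by linarith
    calc Real.log w = (δ * Real.log w) / δ := by field_simp
    _ ≤ w ^ δ / δ := by gcongr
    _ = (1/δ) * w ^ δ := by ring
  have hw1δ : 1 ≤ w ^ δ := by
    calc (1:ℝ) = 1 ^ δ := (Real.one_rpow δ).symm
    _ ≤ w ^ δ := Real.rpow_le_rpow zero_le_one hw1 hδ.le
  have hMC : 0 ≤ M₁ * C₀ := mul_nonneg hM₁ hC₀
  have hfinal : 2 * M₁ / T + (n:ℝ) * (M₁ * C₀) ≤ K₀ * w ^ δ := by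
    have h2MT : 0 ≤ 2 * M₁ / T := by positivity
    have b1 : (n:ℝ) * (M₁ * C₀) ≤ (2 * Real.log w + 1) * (M₁ * C₀) :=
      mul_le_mul_of_nonneg_right hnle hMC
    have b2 : 2 * Real.log w * (M₁ * C₀) ≤ 2 * ((1/δ) * w ^ δ) * (M₁ * C₀) := by
      nlinarith [mul_le_mul_of_nonneg_right hlogw hMC]
    have b3 : (1:ℝ) * (M₁ * C₀) ≤ w ^ δ * (M₁ * C₀) :=
      mul_le_mul_of_nonneg_right hw1δ hMC
    have b4 : 2 * M₁ / T ≤ 2 * M₁ / T * w ^ δ := by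
      nlinarith
    have : K₀ * w ^ δ
        = 2 * M₁ / T * w ^ δ + w ^ δ * (M₁ * C₀) + 2 * ((1/δ) * w ^ δ) * (M₁ * C₀) := by
      rw [hK₀]; field_simp
    nlinarith [b1, b2, b3, b4]
  have hwrw : w ^ δ = T ^ δ * t ^ (-δ) := by
    rw [hwdef, Real.div_rpow hT.le ht.le, Real.rpow_neg ht.le, div_eq_mul_inv]
  have hxn : (0:ℝ) ≤ ‖x‖ := norm_nonneg x
  calc ‖F (S t x)‖ ≤ (2 * M₁ / T + (n:ℝ) * (M₁ * C₀)) * ‖x‖ := hbound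
  _ ≤ (K₀ * w ^ δ) * ‖x‖ := mul_le_mul_of_nonneg_right hfinal hxn
  _ = K₀ * T ^ δ * t ^ (-δ) * ‖x‖ := by rw [hwrw]; ring

lemma aux_int_bound (f : ℝ → ℝ) (a b r c : ℝ) (hab : a ≤ b) (hr : -1 < r)
    (hf0 : ∀ s, 0 ≤ f s)
    (hfb : ∀ s, a < s → s < b → f s ≤ c * (b - s) ^ r) :
    ∫ s in a..b, f s ≤ c * ((b - a) ^ (r + 1) / (r + 1)) := by
  have hg_int : IntervalIntegrable (fun s => c * (b - s) ^ r) volume a b := by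
    have h1 : IntervalIntegrable (fun u : ℝ => u ^ r) volume (b - a) (b - b) :=
      intervalIntegrable_rpow' hr
    have h2 := h1.comp_sub_left b
    simpa only [sub_sub_cancel] using (h2.const_mul c)
  have hne : ∀ᵐ s : ℝ, s ≠ b := by
    have : volume ({b} : Set ℝ) = 0 := measure_singleton b
    filter_upwards [compl_mem_ae_iff.mpr this] with s hs
    simpa using hs
  have hmono : ∫ s in Set.Ioc a b, f s ≤ ∫ s in Set.Ioc a b, c * (b - s) ^ r := by
    apply integral_mono_of_nonneg
    · exact Filter.Eventually.of_forall fun s => hf0 s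
    · exact hg_int.1
    · filter_upwards [ae_restrict_mem measurableSet_Ioc, ae_restrict_of_ae hne]
        with s hs hsb
      exact hfb s hs.1 (lt_of_le_of_ne hs.2 hsb)
  have hval : ∫ s in a..b, c * (b - s) ^ r = c * ((b - a) ^ (r + 1) / (r + 1)) := by
    rw [intervalIntegral.integral_const_mul]
    have h1 : (∫ s in a..b, (b - s) ^ r) = ∫ u in (b - b)..(b - a), u ^ r :=
      intervalIntegral.integral_comp_sub_left (fun u : ℝ => u ^ r) b
    rw [h1, integral_rpow (Or.inl hr), sub_self, Real.zero_rpow (by linarith), sub_zero]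
  calc ∫ s in a..b, f s = ∫ s in Set.Ioc a b, f s := intervalIntegral.integral_of_le hab
  _ ≤ ∫ s in Set.Ioc a b, c * (b - s) ^ r := hmono
  _ = ∫ s in a..b, c * (b - s) ^ r := (intervalIntegral.integral_of_le hab).symm
  _ = c * ((b - a) ^ (r + 1) / (r + 1)) := hval

set_option maxHeartbeats 1000000

/-- Mean-square continuity of the stochastic convolution with
boundary smoothing: let `A` generate an analytic contraction semigroup `S t = e^{At}`
on `H`, `lam > 0`, and let `Φ ∈ L(H₀, H)` be Hilbert–Schmidt with `(lam-A)^α Φ`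
Hilbert–Schmidt for some `α ∈ (1/2,3/4)` (Hilbert–Schmidt norms computed through an
orthonormal basis `e` of `Q^{1/2}H₀`).  Let
`Z t = ∫₀ᵗ (lam-A) e^{A(t-s)} Φ dW(s)`, encoded through the Itô isometry identity
`hiso`.  Then for every `γ ∈ (0,1/4)` there is `c > 0` with
`(E‖Z τ₂ - Z τ₁‖²)^{1/2} ≤ c (τ₂-τ₁)^γ` for all `0 ≤ τ₁ < τ₂ ≤ T`. -/
theorem stochastic_convolution_mean_square_holder
    {H H₀ : Type*} [NormedAddCommGroup H] [InnerProductSpace ℝ H] [CompleteSpace H]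
    [NormedAddCommGroup H₀] [InnerProductSpace ℝ H₀] [CompleteSpace H₀]
    {Ω : Type*} [MeasurableSpace Ω] (P : Measure Ω) [IsProbabilityMeasure P]
    (T : ℝ) (hT : 0 < T) (lam : ℝ) (hlam : 0 < lam)
    (S : ℝ → H →L[ℝ] H)
    (hS0 : S 0 = ContinuousLinearMap.id ℝ H)
    (hSadd : ∀ s t : ℝ, 0 ≤ s → 0 ≤ t → S (s + t) = (S s).comp (S t))
    (hScontr : ∀ t : ℝ, 0 ≤ t → ‖S t‖ ≤ 1)
    (Fp : ℝ → H →ₗ[ℝ] H)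
    (hsmooth : ∀ β : ℝ, 0 < β → ∃ M : ℝ, ∀ t : ℝ, 0 < t → ∀ y : H,
      ‖Fp β (S t y)‖ ≤ M * t ^ (-β) * ‖y‖)
    (hincr : ∀ γ : ℝ, 0 < γ → γ ≤ 1 → ∃ cγ : ℝ, ∀ t : ℝ, 0 < t → ∀ y : H,
      ‖S t y - y‖ ≤ cγ * t ^ γ * ‖Fp γ y‖)
    {ι : Type*} [Countable ι] (e : ι → H₀) (he : Orthonormal ℝ e)
    (Φ : H₀ →L[ℝ] H)
    (α : ℝ) (hα1 : 1/2 < α) (hα2 : α < 3/4)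
    (hΦHS : Summable fun i => ‖Φ (e i)‖ ^ 2)
    (hFpΦHS : Summable fun i => ‖Fp α (Φ (e i))‖ ^ 2)
    (Z : ℝ → Ω → H)
    (hiso : ∀ τ₁ τ₂ : ℝ, 0 ≤ τ₁ → τ₁ < τ₂ → τ₂ ≤ T →
      ∫ ω, ‖Z τ₂ ω - Z τ₁ ω‖ ^ 2 ∂P
        = (∫ s in (0:ℝ)..τ₁, ∑' i,
            ‖Fp 1 ((S (τ₂ - s)) (Φ (e i))) - Fp 1 ((S (τ₁ - s)) (Φ (e i)))‖ ^ 2)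
          + ∫ s in τ₁..τ₂, ∑' i, ‖Fp 1 ((S (τ₂ - s)) (Φ (e i)))‖ ^ 2) :
    ∀ γ : ℝ, 0 < γ → γ < 1/4 → ∃ c : ℝ, 0 < c ∧
      ∀ τ₁ τ₂ : ℝ, 0 ≤ τ₁ → τ₁ < τ₂ → τ₂ ≤ T →
        Real.sqrt (∫ ω, ‖Z τ₂ ω - Z τ₁ ω‖ ^ 2 ∂P) ≤ c * (τ₂ - τ₁) ^ γ := by
  intro γ hγ0 hγ4
  -- Step 1: a uniform Lipschitz bound on `S t - id` via Banach–Steinhaus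
  obtain ⟨c₁, hc₁⟩ := hincr 1 one_pos le_rfl
  have hBS : ∃ C₀ : ℝ, 0 ≤ C₀ ∧ ∀ t : ℝ, 0 < t → ∀ y : H,
      ‖S t y - y‖ ≤ C₀ * t * ‖y‖ := by
    set g : {t : ℝ // 0 < t} → H →L[ℝ] H :=
      fun t => ((t : ℝ))⁻¹ • (S t - ContinuousLinearMap.id ℝ H) with hg
    have hgy : ∀ (t : ℝ) (ht : 0 < t) (y : H),
        g ⟨t, ht⟩ y = t⁻¹ • (S t y - y) := by
      intro t ht y
      simp [hg, ContinuousLinearMap.sub_apply]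
    have hpt : ∀ y : H, ∃ C, ∀ i, ‖g i y‖ ≤ C := by
      intro y
      refine ⟨max c₁ 0 * ‖Fp 1 y‖, ?_⟩
      rintro ⟨t, ht⟩
      have h2 := hc₁ t ht y
      rw [Real.rpow_one] at h2
      have h1 : ‖S t y - y‖ ≤ max c₁ 0 * t * ‖Fp 1 y‖ := by
        have h3 : c₁ * t * ‖Fp 1 y‖ ≤ max c₁ 0 * t * ‖Fp 1 y‖ := by
          have h4 : 0 ≤ t * ‖Fp 1 y‖ := by positivity
          nlinarith [le_max_left c₁ 0]
        linarith
      rw [hgy t ht y, norm_smul, Real.norm_eq_abs, abs_of_pos (inv_pos.mpr ht)]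
      calc t⁻¹ * ‖S t y - y‖ ≤ t⁻¹ * (max c₁ 0 * t * ‖Fp 1 y‖) :=
            mul_le_mul_of_nonneg_left h1 (by positivity)
      _ = max c₁ 0 * ‖Fp 1 y‖ := by field_simp
    obtain ⟨C', hC'⟩ := banach_steinhaus hpt
    refine ⟨max C' 0, le_max_right _ _, ?_⟩
    intro t ht y
    have h1 : ‖g ⟨t, ht⟩ y‖ ≤ max C' 0 * ‖y‖ := by
      calc ‖g ⟨t, ht⟩ y‖ ≤ ‖g ⟨t, ht⟩‖ * ‖y‖ := (g _).le_opNorm y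
      _ ≤ max C' 0 * ‖y‖ :=
            mul_le_mul_of_nonneg_right ((hC' _).trans (le_max_left _ _)) (norm_nonneg y)
    rw [hgy t ht y, norm_smul, Real.norm_eq_abs, abs_of_pos (inv_pos.mpr ht)] at h1
    calc ‖S t y - y‖ = t * (t⁻¹ * ‖S t y - y‖) := by field_simp
    _ ≤ t * (max C' 0 * ‖y‖) := mul_le_mul_of_nonneg_left h1 ht.le
    _ = max C' 0 * t * ‖y‖ := by ring
  obtain ⟨C₀, hC₀0, hC₀⟩ := hBS
  -- Step 2: the `t⁻¹` smoothing bound for `Fp 1`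
  obtain ⟨M, hM⟩ := hsmooth 1 one_pos
  set M₁ : ℝ := max M 0 with hM₁def
  have hM₁0 : (0:ℝ) ≤ M₁ := le_max_right _ _
  have hsm1 : ∀ t : ℝ, 0 < t → ∀ y : H, ‖Fp 1 (S t y)‖ ≤ M₁ * t⁻¹ * ‖y‖ := by
    intro t ht y
    have h1 := hM t ht y
    rw [Real.rpow_neg_one] at h1
    have h2 : M * t⁻¹ * ‖y‖ ≤ M₁ * t⁻¹ * ‖y‖ := by
      have h3 : 0 ≤ t⁻¹ * ‖y‖ := by positivity
      nlinarith [le_max_left M 0]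
    linarith
  -- Step 3: rpow smoothing bound with small negative exponent
  have hdyadic := aux_dyadic T hT S hSadd (Fp 1) M₁ C₀ hM₁0 hC₀0 hsm1 hC₀
  set δ : ℝ := 1/2 - γ with hδdef
  have hδ0 : 0 < δ := by rw [hδdef]; linarith
  obtain ⟨K, hK0, hK⟩ :=
    aux_smooth T hT S hSadd (Fp 1) M₁ C₀ hM₁0 hC₀0 hsm1 hC₀ δ hδ0 hdyadic
  set SΦ : ℝ := ∑' i, ‖Φ (e i)‖ ^ 2 with hSΦdef
  have hSΦ0 : 0 ≤ SΦ := tsum_nonneg fun i => sq_nonneg _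
  set r : ℝ := 2*γ - 1 with hrdef
  have hr : (-1:ℝ) < r := by rw [hrdef]; linarith
  have hγ2 : (0:ℝ) < 2*γ := by linarith
  set Ctot : ℝ := K^2*C₀^2*SΦ*T^(2-2*γ)*(T^(2*γ)/(2*γ)) + K^2*SΦ*(1/(2*γ)) with hCtotdef
  have hCtot0 : 0 ≤ Ctot := by
    have h1 : (0:ℝ) ≤ T ^ (2-2*γ) := Real.rpow_nonneg hT.le _
    have h2 : (0:ℝ) ≤ T ^ (2*γ) := Real.rpow_nonneg hT.le _
    apply add_nonneg
    · exact mul_nonneg (mul_nonneg (mul_nonneg (by positivity) hSΦ0) h1)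
        (div_nonneg h2 hγ2.le)
    · exact mul_nonneg (mul_nonneg (by positivity) hSΦ0) (by positivity)
  refine ⟨Real.sqrt Ctot + 1, by positivity, ?_⟩
  intro τ₁ τ₂ hτ₁ h12 hτ₂T
  set d : ℝ := τ₂ - τ₁ with hddef
  have hd0 : 0 < d := by rw [hddef]; linarith
  have hdT : d ≤ T := by rw [hddef]; linarith
  -- Bound for the second integral
  have hJ₂ : (∫ s in τ₁..τ₂, ∑' i, ‖Fp 1 ((S (τ₂ - s)) (Φ (e i)))‖ ^ 2)
      ≤ (K^2*SΦ) * ((τ₂ - τ₁)^(r+1)/(r+1)) := by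
    apply aux_int_bound _ τ₁ τ₂ r (K^2*SΦ) h12.le hr
      (fun s => tsum_nonneg fun i => sq_nonneg _)
    intro s hs1 hs2
    set u : ℝ := τ₂ - s with hudef
    have hu0 : 0 < u := by rw [hudef]; linarith
    have huT : u ≤ T := by rw [hudef]; linarith
    have hterm : ∀ i, ‖Fp 1 ((S u) (Φ (e i)))‖ ^ 2 ≤ (K^2 * u^r) * ‖Φ (e i)‖^2 := by
      intro i
      have h1 : ‖Fp 1 (S u (Φ (e i)))‖ ≤ K * u ^ (-δ) * ‖Φ (e i)‖ := hK u hu0 huT _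
      have h2 : ‖Fp 1 (S u (Φ (e i)))‖^2 ≤ (K * u ^ (-δ) * ‖Φ (e i)‖)^2 :=
        pow_le_pow_left₀ (norm_nonneg _) h1 2
      have hrr : u ^ (-δ) * u ^ (-δ) = u ^ r := by
        rw [← Real.rpow_add hu0]; congr 1; rw [hrdef, hδdef]; ring
      have h3 : (K * u ^ (-δ) * ‖Φ (e i)‖)^2 = (K^2 * u^r) * ‖Φ (e i)‖^2 := by
        calc (K * u ^ (-δ) * ‖Φ (e i)‖)^2
            = K^2 * (u^(-δ) * u^(-δ)) * ‖Φ (e i)‖^2 := by ring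
        _ = (K^2 * u^r) * ‖Φ (e i)‖^2 := by rw [hrr]
      exact h2.trans (le_of_eq h3)
    have hsummaj : Summable (fun i => (K^2 * u^r) * ‖Φ (e i)‖^2) := hΦHS.mul_left _
    have hsumf : Summable (fun i => ‖Fp 1 ((S u) (Φ (e i)))‖ ^ 2) :=
      Summable.of_nonneg_of_le (fun i => sq_nonneg _) hterm hsummaj
    calc (∑' i, ‖Fp 1 ((S u) (Φ (e i)))‖ ^ 2)
        ≤ ∑' i, (K^2 * u^r) * ‖Φ (e i)‖^2 := Summable.tsum_le_tsum hterm hsumf hsummaj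
    _ = (K^2 * u^r) * SΦ := by rw [tsum_mul_left]
    _ = K^2*SΦ * u^r := by ring
  -- Bound for the first integral
  have hJ₁ : (∫ s in (0:ℝ)..τ₁, ∑' i,
        ‖Fp 1 ((S (τ₂ - s)) (Φ (e i))) - Fp 1 ((S (τ₁ - s)) (Φ (e i)))‖ ^ 2)
      ≤ (K^2*C₀^2*d^2*SΦ) * ((τ₁ - 0)^(r+1)/(r+1)) := by
    apply aux_int_bound _ 0 τ₁ r (K^2*C₀^2*d^2*SΦ) hτ₁ hr
      (fun s => tsum_nonneg fun i => sq_nonneg _)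
    intro s hs0 hsτ₁
    set u : ℝ := τ₁ - s with hudef
    have hu0 : 0 < u := by rw [hudef]; linarith
    have huT : u ≤ T := by rw [hudef]; linarith
    have hcomp : ∀ i, Fp 1 ((S (τ₂ - s)) (Φ (e i))) - Fp 1 ((S u) (Φ (e i)))
        = Fp 1 (S u (S d (Φ (e i)) - Φ (e i))) := by
      intro i
      have hsum : τ₂ - s = u + d := by rw [hudef, hddef]; ring
      have h1 : S (τ₂ - s) (Φ (e i)) = S u (S d (Φ (e i))) := by
        rw [hsum, hSadd u d hu0.le hd0.le]; rfl
      rw [h1, ← map_sub (Fp 1), ← map_sub (S u)]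
    have hterm : ∀ i, ‖Fp 1 ((S (τ₂ - s)) (Φ (e i))) - Fp 1 ((S u) (Φ (e i)))‖ ^ 2
        ≤ (K^2*C₀^2*d^2 * u^r) * ‖Φ (e i)‖^2 := by
      intro i
      rw [hcomp i]
      have h1 : ‖Fp 1 (S u (S d (Φ (e i)) - Φ (e i)))‖
          ≤ K * u^(-δ) * ‖S d (Φ (e i)) - Φ (e i)‖ := hK u hu0 huT _
      have h2 : ‖S d (Φ (e i)) - Φ (e i)‖ ≤ C₀ * d * ‖Φ (e i)‖ := hC₀ d hd0 _
      have h3 : ‖Fp 1 (S u (S d (Φ (e i)) - Φ (e i)))‖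
          ≤ K * u^(-δ) * (C₀ * d * ‖Φ (e i)‖) := by
        calc ‖Fp 1 (S u (S d (Φ (e i)) - Φ (e i)))‖
            ≤ K * u^(-δ) * ‖S d (Φ (e i)) - Φ (e i)‖ := h1
        _ ≤ K * u^(-δ) * (C₀ * d * ‖Φ (e i)‖) := by
              apply mul_le_mul_of_nonneg_left h2
              have : (0:ℝ) ≤ u ^ (-δ) := Real.rpow_nonneg hu0.le _
              positivity
      have h4 : ‖Fp 1 (S u (S d (Φ (e i)) - Φ (e i)))‖^2
          ≤ (K * u^(-δ) * (C₀ * d * ‖Φ (e i)‖))^2 :=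
        pow_le_pow_left₀ (norm_nonneg _) h3 2
      have hrr : u ^ (-δ) * u ^ (-δ) = u ^ r := by
        rw [← Real.rpow_add hu0]; congr 1; rw [hrdef, hδdef]; ring
      have h5 : (K * u^(-δ) * (C₀ * d * ‖Φ (e i)‖))^2
          = (K^2*C₀^2*d^2 * u^r) * ‖Φ (e i)‖^2 := by
        calc (K * u^(-δ) * (C₀ * d * ‖Φ (e i)‖))^2
            = K^2*C₀^2*d^2 * (u^(-δ) * u^(-δ)) * ‖Φ (e i)‖^2 := by ring
        _ = (K^2*C₀^2*d^2 * u^r) * ‖Φ (e i)‖^2 := by rw [hrr]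
      exact h4.trans (le_of_eq h5)
    have hsummaj : Summable (fun i => (K^2*C₀^2*d^2 * u^r) * ‖Φ (e i)‖^2) :=
      hΦHS.mul_left _
    have hsumf : Summable (fun i =>
        ‖Fp 1 ((S (τ₂ - s)) (Φ (e i))) - Fp 1 ((S u) (Φ (e i)))‖ ^ 2) :=
      Summable.of_nonneg_of_le (fun i => sq_nonneg _) hterm hsummaj
    calc (∑' i, ‖Fp 1 ((S (τ₂ - s)) (Φ (e i))) - Fp 1 ((S u) (Φ (e i)))‖ ^ 2)
        ≤ ∑' i, (K^2*C₀^2*d^2 * u^r) * ‖Φ (e i)‖^2 := Summable.tsum_le_tsum hterm hsumf hsummaj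
    _ = (K^2*C₀^2*d^2 * u^r) * SΦ := by rw [tsum_mul_left]
    _ = K^2*C₀^2*d^2*SΦ * u^r := by ring
  -- Combine
  rw [hiso τ₁ τ₂ hτ₁ h12 hτ₂T]
  have hr1 : r + 1 = 2*γ := by rw [hrdef]; ring
  rw [hr1, sub_zero] at hJ₁
  rw [hr1] at hJ₂
  have hτT : τ₁ ^ (2*γ) ≤ T ^ (2*γ) :=
    Real.rpow_le_rpow hτ₁ (by linarith) (by linarith)
  have hd2 : d^2 ≤ T^(2-2*γ) * d^(2*γ) := by
    have h1 : d^(2*γ) * d^(2-2*γ) = d^(2:ℝ) := by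
      rw [← Real.rpow_add hd0]; ring_nf
    have h2 : d^((2:ℝ)) = d^(2:ℕ) := Real.rpow_two d
    have h3 : d^(2-2*γ) ≤ T^(2-2*γ) := Real.rpow_le_rpow hd0.le hdT (by linarith)
    calc d^2 = d^(2*γ) * d^(2-2*γ) := by rw [h1, h2]
    _ ≤ d^(2*γ) * T^(2-2*γ) :=
          mul_le_mul_of_nonneg_left h3 (Real.rpow_nonneg hd0.le _)
    _ = T^(2-2*γ) * d^(2*γ) := by ring
  have e1 : (K^2*C₀^2*d^2*SΦ) * (τ₁^(2*γ)/(2*γ))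
      ≤ K^2*C₀^2*SΦ*T^(2-2*γ)*(T^(2*γ)/(2*γ)) * d^(2*γ) := by
    have hmul : τ₁^(2*γ) * d^2 ≤ T^(2*γ) * (T^(2-2*γ) * d^(2*γ)) :=
      mul_le_mul hτT hd2 (by positivity) (Real.rpow_nonneg hT.le _)
    have hcoef : (0:ℝ) ≤ K^2*C₀^2*SΦ/(2*γ) :=
      div_nonneg (mul_nonneg (by positivity) hSΦ0) hγ2.le
    calc (K^2*C₀^2*d^2*SΦ) * (τ₁^(2*γ)/(2*γ))
        = (K^2*C₀^2*SΦ/(2*γ)) * (τ₁^(2*γ) * d^2) := by ring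
    _ ≤ (K^2*C₀^2*SΦ/(2*γ)) * (T^(2*γ) * (T^(2-2*γ) * d^(2*γ))) :=
          mul_le_mul_of_nonneg_left hmul hcoef
    _ = K^2*C₀^2*SΦ*T^(2-2*γ)*(T^(2*γ)/(2*γ)) * d^(2*γ) := by ring
  have e2 : (K^2*SΦ) * (d^(2*γ)/(2*γ)) = K^2*SΦ*(1/(2*γ)) * d^(2*γ) := by ring
  have hXle : (∫ s in (0:ℝ)..τ₁, ∑' i,
        ‖Fp 1 ((S (τ₂ - s)) (Φ (e i))) - Fp 1 ((S (τ₁ - s)) (Φ (e i)))‖ ^ 2)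
      + (∫ s in τ₁..τ₂, ∑' i, ‖Fp 1 ((S (τ₂ - s)) (Φ (e i)))‖ ^ 2)
      ≤ Ctot * d^(2*γ) := by
    rw [hCtotdef]
    linarith [hJ₁, hJ₂, e1, e2]
  calc Real.sqrt ((∫ s in (0:ℝ)..τ₁, ∑' i,
        ‖Fp 1 ((S (τ₂ - s)) (Φ (e i))) - Fp 1 ((S (τ₁ - s)) (Φ (e i)))‖ ^ 2)
      + ∫ s in τ₁..τ₂, ∑' i, ‖Fp 1 ((S (τ₂ - s)) (Φ (e i)))‖ ^ 2)
      ≤ Real.sqrt (Ctot * d^(2*γ)) := Real.sqrt_le_sqrt hXle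
  _ = Real.sqrt Ctot * Real.sqrt (d^(2*γ)) := Real.sqrt_mul hCtot0 _
  _ = Real.sqrt Ctot * d^γ := by
      congr 1
      have h1 : (d^γ)^(2:ℕ) = d^(2*γ) := by
        rw [← Real.rpow_natCast (d^γ) 2, ← Real.rpow_mul hd0.le]
        norm_num [mul_comm]
      rw [← h1, Real.sqrt_sq (Real.rpow_nonneg hd0.le γ)]
  _ ≤ (Real.sqrt Ctot + 1) * d^γ := by
      have hdγ : 0 ≤ d^γ := Real.rpow_nonneg hd0.le γ
      nlinarith [Real.sqrt_nonneg Ctot]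
end
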